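/- Let φ : [0,1] → [0,1] be continuously differentiable with ⋂_n φ_n([0,1]) = {x₀} and φ'(x₀) ≠ 0. Then for each n one may choose x_n → x₀ and f_n ∈ C¹[0,1] with ‖f_n‖_{C¹} ≤ 1 + 1/n, f_n'(φ(x_n)) = −1, f_n'(x₀) = 1, and for every compact operator K on C¹[0,1], the composition operator Tf = f∘φ satisfies ‖T − K‖ ≥ |φ'(x₀)|/2. Hence the distance from T to the compact operators is at least |φ'(x₀)|/2 > 0. -/

import Mathlib

/-!
Since `φ'(x₀) ≠ 0` and `φ(x₀) = x₀`, there are points `xₙ → x₀` with `φ(xₙ) ≠ x₀`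
and `φ(xₙ) → x₀`. With `d = φ(xₙ) - x₀`, the function `fₙ(y) = (d/π) sin(π(y - x₀)/d)`
has derivative `1` at `x₀` and `-1` at `φ(xₙ)`, derivative bounded by `1` and sup norm
at most `|d|/π`. By the chain rule `(Tfₙ)'` equals `φ'(x₀)` at `x₀` and
`-φ'(xₙ) → -φ'(x₀)` at `xₙ`. For compact `K`, some subsequence of `Kfₙ` converges to a
`g`, and `‖Tfₙ - g‖ ≤ 2‖T - K‖ + o(1)` bounds both `|φ'(x₀) - g'(x₀)|` and, by continuity
of `g'`, `|φ'(x₀) + g'(x₀)|`; adding the two gives `|φ'(x₀)| ≤ 2‖T - K‖`.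
-/

open Set Filter Topology Real

theorem Set.MapsTo.apply_eq_of_iInter_image_iterate_eq_singleton {α : Type*} {φ : α → α}
    {s : Set α} {x₀ : α} (hφ : MapsTo φ s s) (hinter : ⋂ n : ℕ, φ^[n] '' s = {x₀}) :
    φ x₀ = x₀ := by
  have hx₀ : x₀ ∈ ⋂ n : ℕ, φ^[n] '' s := hinter ▸ rfl
  have hφx₀ : φ x₀ ∈ ⋂ n : ℕ, φ^[n] '' s := mem_iInter.2 fun n => by
    obtain ⟨y, hy, rfl⟩ := mem_iInter.1 hx₀ n
    exact ⟨φ y, hφ hy, by rw [← Function.iterate_succ_apply, Function.iterate_succ_apply']⟩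
  rwa [hinter] at hφx₀

theorem HasDerivWithinAt.exists_seq_tendsto_apply_ne {φ : ℝ → ℝ} {s : Set ℝ} {x₀ c : ℝ}
    (hφ : HasDerivWithinAt φ c s x₀) (hc : c ≠ 0) (hacc : AccPt x₀ (𝓟 s)) :
    ∃ xs : ℕ → ℝ,
      (∀ n : ℕ, xs n ∈ s ∧ φ (xs n) ≠ φ x₀ ∧ dist (φ (xs n)) (φ x₀) < 1 / (n + 1)) ∧
        Tendsto xs atTop (𝓝 x₀) := by
  have := accPt_principal_iff_nhdsWithin.1 hacc
  have hφ' := hφ.tendsto_nhdsWithin_nhdsNE hc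
  have hpoint : ∀ n : ℕ, ∃ x, (x ∈ s ∧ φ x ≠ φ x₀ ∧ dist (φ x) (φ x₀) < 1 / (n + 1)) ∧
      dist x x₀ < 1 / (n + 1) := fun n => by
    have hε : (0 : ℝ) < 1 / (n + 1) := Nat.one_div_pos_of_nat
    have hs : ∀ᶠ x in 𝓝[s \ {x₀}] x₀, x ∈ s :=
      mem_of_superset self_mem_nhdsWithin sdiff_subset
    have hφx :
        ∀ᶠ x in 𝓝[s \ {x₀}] x₀, φ x ∈ {φ x₀}ᶜ ∩ Metric.ball (φ x₀) (1 / (n + 1)) :=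
      hφ' (inter_mem_nhdsWithin _ (Metric.ball_mem_nhds _ hε))
    have hx : ∀ᶠ x in 𝓝[s \ {x₀}] x₀, x ∈ Metric.ball x₀ (1 / (n + 1)) :=
      nhdsWithin_le_nhds (Metric.ball_mem_nhds _ hε)
    obtain ⟨x, hxs, ⟨hne, hdist⟩, hx⟩ := (hs.and (hφx.and hx)).exists
    exact ⟨x, ⟨hxs, hne, hdist⟩, hx⟩
  choose xs hxs hdist using hpoint
  exact ⟨xs, hxs, tendsto_iff_dist_tendsto_zero.2 <| squeeze_zero (fun _ => dist_nonneg)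
    (fun n => (hdist n).le) tendsto_one_div_add_atTop_nhds_zero_nat⟩

theorem IsCompactOperator.exists_tendsto_subseq {𝕜 E F : Type*} [NontriviallyNormedField 𝕜]
    [SeminormedAddCommGroup E] [NormedSpace 𝕜 E] [NormedAddCommGroup F] [NormedSpace 𝕜 F]
    {K : E →L[𝕜] F} (hK : IsCompactOperator K) {u : ℕ → E} {M : ℝ} (hu : ∀ n, ‖u n‖ ≤ M) :
    ∃ G : F, ∃ σ : ℕ → ℕ, StrictMono σ ∧ Tendsto (fun k => K (u (σ k))) atTop (𝓝 G) := by
  obtain ⟨G, -, σ, hσ, hlim⟩ :=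
    (hK.isCompact_closure_image_closedBall (f := (K : E →ₗ[𝕜] F)) M).tendsto_subseq
      fun n => subset_closure ⟨u n, mem_closedBall_zero_iff.2 (hu n), rfl⟩
  exact ⟨G, σ, hσ, hlim⟩

theorem ContinuousLinearMap.norm_apply_sub_le {𝕜 E F : Type*} [NontriviallyNormedField 𝕜]
    [SeminormedAddCommGroup E] [NormedSpace 𝕜 E] [SeminormedAddCommGroup F] [NormedSpace 𝕜 F]
    (T K : E →L[𝕜] F) (f : E) (G : F) : ‖T f - G‖ ≤ ‖T - K‖ * ‖f‖ + ‖K f - G‖ :=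
  calc ‖T f - G‖ = ‖(T - K) f + (K f - G)‖ := by simp
    _ ≤ ‖(T - K) f‖ + ‖K f - G‖ := norm_add_le _ _
    _ ≤ ‖T - K‖ * ‖f‖ + ‖K f - G‖ := by gcongr; exact (T - K).le_opNorm f

section C1

variable {B : Type*} [NormedAddCommGroup B] [NormedSpace ℝ B] {ι : B →ₗ[ℝ] (ℝ → ℝ)}

theorem abs_derivWithin_le_norm
    (hnorm : ∀ f : B, ‖f‖ = (⨆ x : Icc (0:ℝ) 1, |ι f (x : ℝ)|) +
        (⨆ x : Icc (0:ℝ) 1, |derivWithin (ι f) (Icc (0:ℝ) 1) (x : ℝ)|))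
    (hC1 : ∀ f : B, ContDiffOn ℝ 1 (ι f) (Icc (0:ℝ) 1)) (f : B) {x : ℝ}
    (hx : x ∈ Icc (0:ℝ) 1) :
    |derivWithin (ι f) (Icc 0 1) x| ≤ ‖f‖ := by
  have hbdd : BddAbove (range fun y : Icc (0:ℝ) 1 => |derivWithin (ι f) (Icc 0 1) y|) := by
    have := (isCompact_Icc.image_of_continuousOn
      ((hC1 f).continuousOn_derivWithin (uniqueDiffOn_Icc zero_lt_one) le_rfl).abs).bddAbove
    rwa [image_eq_range] at this
  rw [hnorm f]
  exact le_add_of_nonneg_of_le (Real.iSup_nonneg fun _ => abs_nonneg _)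
    (le_ciSup hbdd ⟨x, hx⟩)

theorem abs_derivWithin_sub_le_norm_sub
    (hnorm : ∀ f : B, ‖f‖ = (⨆ x : Icc (0:ℝ) 1, |ι f (x : ℝ)|) +
        (⨆ x : Icc (0:ℝ) 1, |derivWithin (ι f) (Icc (0:ℝ) 1) (x : ℝ)|))
    (hC1 : ∀ f : B, ContDiffOn ℝ 1 (ι f) (Icc (0:ℝ) 1)) (f g : B) {x : ℝ}
    (hx : x ∈ Icc (0:ℝ) 1) :
    |derivWithin (ι f) (Icc 0 1) x - derivWithin (ι g) (Icc 0 1) x| ≤ ‖f - g‖ := by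
  have hdiff : ∀ h : B, DifferentiableWithinAt ℝ (ι h) (Icc 0 1) x :=
    fun h => (hC1 h).differentiableOn one_ne_zero x hx
  rw [← derivWithin_sub (hdiff f) (hdiff g), ← map_sub]
  exact abs_derivWithin_le_norm hnorm hC1 _ hx

theorem exists_norm_le_derivWithin_eq_one_neg_one
    (hnorm : ∀ f : B, ‖f‖ = (⨆ x : Icc (0:ℝ) 1, |ι f (x : ℝ)|) +
        (⨆ x : Icc (0:ℝ) 1, |derivWithin (ι f) (Icc (0:ℝ) 1) (x : ℝ)|))
    (hsurj : ∀ g : ℝ → ℝ, ContDiffOn ℝ 1 g (Icc (0:ℝ) 1) →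
      ∃ f : B, ∀ x ∈ Icc (0:ℝ) 1, ι f x = g x)
    {x₀ p : ℝ} (hx₀ : x₀ ∈ Icc (0:ℝ) 1) (hp : p ∈ Icc (0:ℝ) 1) (hne : p ≠ x₀) :
    ∃ f : B, ‖f‖ ≤ 1 + dist p x₀ ∧ derivWithin (ι f) (Icc 0 1) x₀ = 1 ∧
      derivWithin (ι f) (Icc 0 1) p = -1 := by
  set d := p - x₀
  have hd : d ≠ 0 := sub_ne_zero.2 hne
  set g : ℝ → ℝ := fun y => d / π * sin (π * (y - x₀) / d)
  have hg' : ∀ y, HasDerivAt g (cos (π * (y - x₀) / d)) y := fun y => by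
    refine ((((hasDerivAt_id' y).sub_const x₀).const_mul π).div_const d).sin.const_mul (d / π)
      |>.congr_deriv ?_
    field_simp
  obtain ⟨f, hf⟩ := hsurj g (by fun_prop)
  have hf' : ∀ x ∈ Icc (0:ℝ) 1, derivWithin (ι f) (Icc 0 1) x = cos (π * (x - x₀) / d) :=
    fun x hx => by
      rw [derivWithin_congr hf (hf x hx)]
      exact (hg' x).hasDerivWithinAt.derivWithin (uniqueDiffOn_Icc zero_lt_one x hx)
  have : Nonempty (Icc (0:ℝ) 1) := ⟨⟨0, left_mem_Icc.2 zero_le_one⟩⟩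
  refine ⟨f, ?_, ?_, ?_⟩
  · rw [hnorm f, add_comm 1, Real.dist_eq]
    gcongr ?_ + ?_
    · refine ciSup_le fun ⟨y, hy⟩ => ?_
      calc |ι f y| = |d| / π * |sin (π * (y - x₀) / d)| := by
            rw [hf y hy, abs_mul, abs_div, abs_of_pos pi_pos]
        _ ≤ |d| / π * 1 := by gcongr; exact abs_sin_le_one _
        _ ≤ |d| := by
            rw [mul_one]; exact div_le_self (abs_nonneg d) (by linarith [pi_gt_three])
    · exact ciSup_le fun ⟨y, hy⟩ => (hf' y hy).symm ▸ abs_cos_le_one _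
  · rw [hf' x₀ hx₀, sub_self, mul_zero, zero_div, cos_zero]
  · rw [hf' p hp, mul_div_assoc, div_self hd, mul_one, cos_pi]

theorem abs_le_of_tendsto_derivWithin_neg
    (hnorm : ∀ f : B, ‖f‖ = (⨆ x : Icc (0:ℝ) 1, |ι f (x : ℝ)|) +
        (⨆ x : Icc (0:ℝ) 1, |derivWithin (ι f) (Icc (0:ℝ) 1) (x : ℝ)|))
    (hC1 : ∀ f : B, ContDiffOn ℝ 1 (ι f) (Icc (0:ℝ) 1))
    {x₀ a ρ : ℝ} (hx₀ : x₀ ∈ Icc (0:ℝ) 1) {y : ℕ → ℝ} (hy : ∀ k, y k ∈ Icc (0:ℝ) 1)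
    (hy_lim : Tendsto y atTop (𝓝 x₀)) {u : ℕ → B} {G : B} {r : ℕ → ℝ}
    (hr : ∀ k, ‖u k - G‖ ≤ r k) (hr_lim : Tendsto r atTop (𝓝 ρ))
    (ha : ∀ k, derivWithin (ι (u k)) (Icc 0 1) x₀ = a)
    (hb : Tendsto (fun k => derivWithin (ι (u k)) (Icc 0 1) (y k)) atTop (𝓝 (-a))) :
    |a| ≤ ρ := by
  set G' := derivWithin (ι G) (Icc 0 1)
  have hG' : Tendsto (fun k => G' (y k)) atTop (𝓝 (G' x₀)) :=
    ((hC1 G).continuousOn_derivWithin (uniqueDiffOn_Icc zero_lt_one) le_rfl x₀ hx₀).tendsto.comp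
      (tendsto_nhdsWithin_iff.2 ⟨hy_lim, .of_forall hy⟩)
  have hdist : ∀ k, ∀ x ∈ Icc (0:ℝ) 1,
      |derivWithin (ι (u k)) (Icc 0 1) x - G' x| ≤ r k := fun k x hx =>
    (abs_derivWithin_sub_le_norm_sub hnorm hC1 (u k) G hx).trans (hr k)
  have h₀ : |a - G' x₀| ≤ ρ :=
    ge_of_tendsto hr_lim (.of_forall fun k => ha k ▸ hdist k x₀ hx₀)
  have h₁ : |-a - G' x₀| ≤ ρ :=
    le_of_tendsto_of_tendsto (hb.sub hG').abs hr_lim (.of_forall fun k => hdist k (y k) (hy k))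
  have := abs_sub (a - G' x₀) (-a - G' x₀)
  rw [show a - G' x₀ - (-a - G' x₀) = 2 * a by ring, abs_mul, abs_two] at this
  linarith

theorem exists_seq_derivWithin_eq_neg_one_one
    (hnorm : ∀ f : B, ‖f‖ = (⨆ x : Icc (0:ℝ) 1, |ι f (x : ℝ)|) +
        (⨆ x : Icc (0:ℝ) 1, |derivWithin (ι f) (Icc (0:ℝ) 1) (x : ℝ)|))
    (hsurj : ∀ g : ℝ → ℝ, ContDiffOn ℝ 1 g (Icc (0:ℝ) 1) →
      ∃ f : B, ∀ x ∈ Icc (0:ℝ) 1, ι f x = g x)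
    {φ : ℝ → ℝ} (hφmaps : MapsTo φ (Icc (0:ℝ) 1) (Icc (0:ℝ) 1)) {x₀ : ℝ}
    (hx₀ : x₀ ∈ Icc (0:ℝ) 1) (hφ : DifferentiableWithinAt ℝ φ (Icc 0 1) x₀)
    (hder : derivWithin φ (Icc 0 1) x₀ ≠ 0) (hfix : φ x₀ = x₀) :
    ∃ xs : ℕ → ℝ, (∀ n, xs n ∈ Icc (0:ℝ) 1) ∧ Tendsto xs atTop (𝓝 x₀) ∧
      ∃ fs : ℕ → B, ∀ n : ℕ, ‖fs n‖ ≤ 1 + 1 / (n + 1) ∧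
        derivWithin (ι (fs n)) (Icc 0 1) (φ (xs n)) = -1 ∧
        derivWithin (ι (fs n)) (Icc 0 1) x₀ = 1 := by
  obtain ⟨xs, hxs, hlim⟩ := hφ.hasDerivWithinAt.exists_seq_tendsto_apply_ne hder
    (uniqueDiffOn_Icc zero_lt_one x₀ hx₀).accPt
  simp only [hfix] at hxs
  choose fs hfs using fun n =>
    exists_norm_le_derivWithin_eq_one_neg_one hnorm hsurj hx₀ (hφmaps (hxs n).1) (hxs n).2.1
  refine ⟨xs, fun n => (hxs n).1, hlim, fs, fun n => ⟨?_, (hfs n).2.2, (hfs n).2.1⟩⟩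
  linarith [(hfs n).1, (hxs n).2.2]

theorem abs_derivWithin_le_mul_norm_sub_of_isCompactOperator
    (hnorm : ∀ f : B, ‖f‖ = (⨆ x : Icc (0:ℝ) 1, |ι f (x : ℝ)|) +
        (⨆ x : Icc (0:ℝ) 1, |derivWithin (ι f) (Icc (0:ℝ) 1) (x : ℝ)|))
    (hC1 : ∀ f : B, ContDiffOn ℝ 1 (ι f) (Icc (0:ℝ) 1))
    {φ : ℝ → ℝ} (hφmaps : MapsTo φ (Icc (0:ℝ) 1) (Icc (0:ℝ) 1))
    (hφ : ContDiffOn ℝ 1 φ (Icc (0:ℝ) 1)) {x₀ : ℝ} (hx₀ : x₀ ∈ Icc (0:ℝ) 1) (hfix : φ x₀ = x₀)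
    {T : B →L[ℝ] B} (hT : ∀ f : B, ∀ x ∈ Icc (0:ℝ) 1, ι (T f) x = ι f (φ x))
    {xs : ℕ → ℝ} (hxs : ∀ n, xs n ∈ Icc (0:ℝ) 1) (hlim : Tendsto xs atTop (𝓝 x₀))
    {fs : ℕ → B} {M : ℝ} (hfs_norm : ∀ n, ‖fs n‖ ≤ M)
    (hfs_xs : ∀ n, derivWithin (ι (fs n)) (Icc 0 1) (φ (xs n)) = -1)
    (hfs_x₀ : ∀ n, derivWithin (ι (fs n)) (Icc 0 1) x₀ = 1)
    {K : B →L[ℝ] B} (hK : IsCompactOperator K) :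
    |derivWithin φ (Icc 0 1) x₀| ≤ M * ‖T - K‖ := by
  have hchain : ∀ f : B, ∀ x ∈ Icc (0:ℝ) 1, derivWithin (ι (T f)) (Icc 0 1) x =
      derivWithin (ι f) (Icc 0 1) (φ x) * derivWithin φ (Icc 0 1) x := fun f x hx => by
    rw [derivWithin_congr (hT f) (hT f x hx)]
    exact derivWithin_comp x ((hC1 f).differentiableOn one_ne_zero _ (hφmaps hx))
      (hφ.differentiableOn one_ne_zero x hx) hφmaps
  obtain ⟨G, σ, hσ, hKG⟩ := hK.exists_tendsto_subseq hfs_norm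
  have hφ' : Tendsto (fun k => derivWithin φ (Icc 0 1) (xs (σ k))) atTop
      (𝓝 (derivWithin φ (Icc 0 1) x₀)) :=
    (hφ.continuousOn_derivWithin (uniqueDiffOn_Icc zero_lt_one) le_rfl x₀ hx₀).tendsto.comp
      (tendsto_nhdsWithin_iff.2 ⟨hlim.comp hσ.tendsto_atTop, .of_forall fun k => hxs _⟩)
  have hr_lim : Tendsto (fun k => M * ‖T - K‖ + ‖K (fs (σ k)) - G‖) atTop (𝓝 (M * ‖T - K‖)) := by
    simpa using tendsto_const_nhds.add (hKG.sub_const G).norm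
  refine abs_le_of_tendsto_derivWithin_neg hnorm hC1 hx₀ (fun k => hxs (σ k))
    (hlim.comp hσ.tendsto_atTop) (u := fun k => T (fs (σ k))) (G := G)
    (fun k => ?_) hr_lim (fun k => by rw [hchain _ _ hx₀, hfix, hfs_x₀, one_mul]) ?_
  · calc ‖T (fs (σ k)) - G‖ ≤ ‖T - K‖ * ‖fs (σ k)‖ + ‖K (fs (σ k)) - G‖ := T.norm_apply_sub_le K _ G
      _ ≤ M * ‖T - K‖ + ‖K (fs (σ k)) - G‖ := by
        rw [mul_comm]; gcongr; exact hfs_norm _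
  · simpa [hchain _ _ (hxs _), hfs_xs] using hφ'.neg

end C1

theorem stmt_19_general
    {B : Type*} [NormedAddCommGroup B] [NormedSpace ℝ B]
    (ι : B →ₗ[ℝ] (ℝ → ℝ))
    (hnorm : ∀ f : B, ‖f‖ = (⨆ x : Icc (0:ℝ) 1, |ι f (x : ℝ)|) +
        (⨆ x : Icc (0:ℝ) 1, |derivWithin (ι f) (Icc (0:ℝ) 1) (x : ℝ)|))
    (hC1 : ∀ f : B, ContDiffOn ℝ 1 (ι f) (Icc (0:ℝ) 1))
    (hsurj : ∀ g : ℝ → ℝ, ContDiffOn ℝ 1 g (Icc (0:ℝ) 1) →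
      ∃ f : B, ∀ x ∈ Icc (0:ℝ) 1, ι f x = g x)
    (φ : ℝ → ℝ) (hφmaps : MapsTo φ (Icc (0:ℝ) 1) (Icc (0:ℝ) 1))
    (hφ : ContDiffOn ℝ 1 φ (Icc (0:ℝ) 1))
    (x₀ : ℝ) (hx₀ : x₀ ∈ Icc (0:ℝ) 1)
    (hinter : (⋂ n : ℕ, φ^[n] '' Icc (0:ℝ) 1) = {x₀})
    (hder : derivWithin φ (Icc (0:ℝ) 1) x₀ ≠ 0)
    (T : B →L[ℝ] B)
    (hT : ∀ f : B, ∀ x ∈ Icc (0:ℝ) 1, ι (T f) x = ι f (φ x)) :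
    (∃ xs : ℕ → ℝ, (∀ n, xs n ∈ Icc (0:ℝ) 1) ∧ Tendsto xs atTop (nhds x₀) ∧
      ∃ fs : ℕ → B, ∀ n : ℕ, 1 ≤ n → ‖fs n‖ ≤ 1 + 1 / (n : ℝ) ∧
        derivWithin (ι (fs n)) (Icc (0:ℝ) 1) (φ (xs n)) = -1 ∧
        derivWithin (ι (fs n)) (Icc (0:ℝ) 1) x₀ = 1) ∧
    (∀ K : B →L[ℝ] B, IsCompactOperator (K : B → B) →
      |derivWithin φ (Icc (0:ℝ) 1) x₀| / 2 ≤ ‖T - K‖) ∧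
    0 < |derivWithin φ (Icc (0:ℝ) 1) x₀| / 2 := by
  have hfix : φ x₀ = x₀ := hφmaps.apply_eq_of_iInter_image_iterate_eq_singleton hinter
  obtain ⟨xs, hxs, hlim, fs, hfs⟩ := exists_seq_derivWithin_eq_neg_one_one hnorm hsurj hφmaps hx₀
    (hφ.differentiableOn one_ne_zero x₀ hx₀) hder hfix
  have hfs_le_two : ∀ n, ‖fs n‖ ≤ 2 := fun n => by
    have : 1 / ((n : ℝ) + 1) ≤ 1 := by rw [div_le_one (by positivity)]; simp
    linarith [(hfs n).1]
  refine ⟨⟨xs, hxs, hlim, fs, fun n hn => ⟨(hfs n).1.trans ?_, (hfs n).2⟩⟩, fun K hK => ?_, ?_⟩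
  · gcongr; linarith
  · have := abs_derivWithin_le_mul_norm_sub_of_isCompactOperator hnorm hC1 hφmaps hφ hx₀ hfix hT
      hxs hlim hfs_le_two (fun n => (hfs n).2.1) (fun n => (hfs n).2.2) hK
    linarith
  · have := abs_pos.2 hder
    positivity

/-- `C¹[0,1]` is modeled by a Banach space `B` with a linear realization `ι` as the `C¹`
functions on `[0,1]`, carrying the norm `‖f‖ = ‖f‖_∞ + ‖f'‖_∞` (derivatives within
`[0,1]`). Let `φ : [0,1] → [0,1]` be `C¹` with `⋂_n φ_n([0,1]) = {x₀}` and `φ'(x₀) ≠ 0`,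
and let `T` be the composition operator `Tf = f∘φ`. Then one may choose `x_n → x₀` in
`[0,1]` and `f_n` with `‖f_n‖ ≤ 1 + 1/n`, `f_n'(φ(x_n)) = -1`, `f_n'(x₀) = 1`, and for
every compact operator `K` one has `‖T - K‖ ≥ |φ'(x₀)|/2`; hence the distance from `T` to
the compact operators is at least `|φ'(x₀)|/2 > 0`. -/
theorem stmt_19
    {B : Type*} [NormedAddCommGroup B] [NormedSpace ℝ B] [CompleteSpace B]
    (ι : B →ₗ[ℝ] (ℝ → ℝ))
    (hnorm : ∀ f : B, ‖f‖ = (⨆ x : Icc (0:ℝ) 1, |ι f (x : ℝ)|) +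
        (⨆ x : Icc (0:ℝ) 1, |derivWithin (ι f) (Icc (0:ℝ) 1) (x : ℝ)|))
    (hC1 : ∀ f : B, ContDiffOn ℝ 1 (ι f) (Icc (0:ℝ) 1))
    (hsurj : ∀ g : ℝ → ℝ, ContDiffOn ℝ 1 g (Icc (0:ℝ) 1) →
      ∃ f : B, ∀ x ∈ Icc (0:ℝ) 1, ι f x = g x)
    (φ : ℝ → ℝ) (hφmaps : MapsTo φ (Icc (0:ℝ) 1) (Icc (0:ℝ) 1))
    (hφ : ContDiffOn ℝ 1 φ (Icc (0:ℝ) 1))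
    (x₀ : ℝ) (hx₀ : x₀ ∈ Icc (0:ℝ) 1)
    (hinter : (⋂ n : ℕ, φ^[n] '' Icc (0:ℝ) 1) = {x₀})
    (hder : derivWithin φ (Icc (0:ℝ) 1) x₀ ≠ 0)
    (T : B →L[ℝ] B)
    (hT : ∀ f : B, ∀ x ∈ Icc (0:ℝ) 1, ι (T f) x = ι f (φ x)) :
    (∃ xs : ℕ → ℝ, (∀ n, xs n ∈ Icc (0:ℝ) 1) ∧ Tendsto xs atTop (nhds x₀) ∧
      ∃ fs : ℕ → B, ∀ n : ℕ, 1 ≤ n → ‖fs n‖ ≤ 1 + 1 / (n : ℝ) ∧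
        derivWithin (ι (fs n)) (Icc (0:ℝ) 1) (φ (xs n)) = -1 ∧
        derivWithin (ι (fs n)) (Icc (0:ℝ) 1) x₀ = 1) ∧
    (∀ K : B →L[ℝ] B, IsCompactOperator (K : B → B) →
      |derivWithin φ (Icc (0:ℝ) 1) x₀| / 2 ≤ ‖T - K‖) ∧
    0 < |derivWithin φ (Icc (0:ℝ) 1) x₀| / 2 :=
  stmt_19_general ι hnorm hC1 hsurj φ hφmaps hφ x₀ hx₀ hinter hder T hT
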